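/- arXiv:1806.07023 — 9 statements merged into one kernel-verified Lean document; each statement's English description precedes it below -/
import Mathlib

section
/- If φ is a skew-morphism of a finite group A with power function π, then for all x, y ∈ A: π(x) = π(y) (mod n) if and only if (Ker φ)·x = (Ker φ)·y, where Ker φ = {x ∈ A | π(x) = 1} and n = |φ|. -/
/-- A skew-morphism of a group `A`: a permutation `φ` fixing the identity together with
a power function `pi` (a natural-number representative of the `ℤ_n`-valued power function,
`n = orderOf φ`) such that `φ (x * y) = φ x * φ ^ (pi x) y`. -/
structure SkewMorphism (A : Type*) [Group A] where
  toPerm : Equiv.Perm A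
  pi : A → ℕ
  map_one' : toPerm 1 = 1
  skew : ∀ x y : A, toPerm (x * y) = toPerm x * (toPerm ^ pi x) y

/-- The kernel of a skew-morphism: elements where the power function is `1` in `ℤ_n`. -/
def SkewMorphism.ker {A : Type*} [Group A] (S : SkewMorphism A) : Set A :=
  {x : A | S.pi x ≡ 1 [MOD orderOf S.toPerm]}

/-- The core of a skew-morphism: `⋂_{i=1}^{n} φ^i (Ker φ)`. -/
def SkewMorphism.core {A : Type*} [Group A] (S : SkewMorphism A) : Set A :=
  ⋂ i ∈ Finset.Icc 1 (orderOf S.toPerm), (S.toPerm ^ i) '' S.ker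

namespace SkewMorphism
variable {A : Type*} [Group A] (S : SkewMorphism A)

/-- iterated power function -/
def sig (x : A) (k : ℕ) : ℕ := ∑ i ∈ Finset.range k, S.pi ((S.toPerm ^ i) x)

@[simp] lemma sig_one (x : A) : S.sig x 1 = S.pi x := by
  simp [sig]

lemma iter_skew (k : ℕ) (x y : A) :
    (S.toPerm ^ k) (x * y) = (S.toPerm ^ k) x * (S.toPerm ^ S.sig x k) y := by
  induction k with
  | zero => simp [sig]
  | succ k ih =>
    have h1 : ∀ z : A, (S.toPerm ^ (k + 1)) z = S.toPerm ((S.toPerm ^ k) z) := by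
      intro z; rw [pow_succ']; rfl
    have hs : S.sig x (k + 1) = S.pi ((S.toPerm ^ k) x) + S.sig x k := by
      simp [sig, Finset.sum_range_succ, add_comm]
    rw [h1, ih, S.skew, h1, hs, pow_add, Equiv.Perm.mul_apply]

lemma sig_congr {a b : ℕ} (h : S.toPerm ^ a = S.toPerm ^ b) (y : A) :
    S.toPerm ^ S.sig y a = S.toPerm ^ S.sig y b := by
  ext z
  have ha := S.iter_skew a y z
  have hb := S.iter_skew b y z
  rw [h] at ha
  exact mul_left_cancel (ha.symm.trans hb)

lemma pi_mul (x y : A) :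
    S.toPerm ^ S.pi (x * y) = S.toPerm ^ S.sig y (S.pi x) := by
  ext z
  have h1 := S.skew (x * y) z
  have h2 := S.skew x (y * z)
  rw [S.iter_skew (S.pi x) y z, ← mul_assoc, ← mul_assoc, ← S.skew x y] at h2
  exact mul_left_cancel (h1.symm.trans h2)

lemma pi_one_pow : S.toPerm ^ S.pi 1 = S.toPerm := by
  ext z
  have := S.skew 1 z
  simpa [S.map_one'] using this.symm

lemma pi_pow_eq_iff (a b : ℕ) :
    a ≡ b [MOD orderOf S.toPerm] ↔ S.toPerm ^ a = S.toPerm ^ b :=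
  pow_eq_pow_iff_modEq.symm

lemma one_mem_ker : (1 : A) ∈ S.ker := by
  have : S.toPerm ^ S.pi (1 : A) = S.toPerm ^ 1 := by rw [pow_one]; exact S.pi_one_pow
  exact (S.pi_pow_eq_iff _ _).mpr this

lemma ker_pow {k : A} (hk : k ∈ S.ker) : S.toPerm ^ S.pi k = S.toPerm ^ 1 :=
  (S.pi_pow_eq_iff _ _).mp hk

lemma pi_ker_mul {k : A} (hk : k ∈ S.ker) (x : A) :
    S.pi (k * x) ≡ S.pi x [MOD orderOf S.toPerm] := by
  rw [S.pi_pow_eq_iff, S.pi_mul, S.sig_congr (S.ker_pow hk)]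
  simp

end SkewMorphism

theorem pi_eq_iff_coset_eq {A : Type*} [Group A] [Fintype A] (S : SkewMorphism A)
    (x y : A) :
    S.pi x ≡ S.pi y [MOD orderOf S.toPerm] ↔
      (· * x) '' S.ker = (· * y) '' S.ker := by
  constructor
  · intro h
    have key : ∀ u v : A, S.pi u ≡ S.pi v [MOD orderOf S.toPerm] →
        (· * u) '' S.ker ⊆ (· * v) '' S.ker := by
      rintro u v huv z ⟨k, hk, rfl⟩
      refine ⟨k * u * v⁻¹, ?_, by group⟩
      have h1 : S.toPerm ^ S.pi (k * u) = S.toPerm ^ S.pi v := by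
        rw [← (S.pi_pow_eq_iff _ _).mp ((S.pi_ker_mul hk u).trans huv)]
      rw [SkewMorphism.ker, Set.mem_setOf_eq, S.pi_pow_eq_iff, pow_one,
        S.pi_mul, S.sig_congr h1, ← S.pi_mul, mul_inv_cancel]
      exact S.pi_one_pow
    exact Set.Subset.antisymm (key x y h) (key y x h.symm)
  · intro h
    have hx : x ∈ (· * x) '' S.ker := ⟨1, S.one_mem_ker, one_mul x⟩
    rw [h] at hx
    obtain ⟨k, hk, hky⟩ := hx
    simp only at hky
    rw [← hky]
    exact S.pi_ker_mul hk y
end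

section
/- If φ is a skew-morphism of a finite group A, then Fix φ = {x ∈ A | φ(x) = x} is a subgroup of A that is invariant under φ. -/
theorem fix_is_invariant_subgroup {A : Type*} [Group A] [Fintype A] (S : SkewMorphism A) :
    (∃ H : Subgroup A, (H : Set A) = {x : A | S.toPerm x = x}) ∧
      S.toPerm '' {x : A | S.toPerm x = x} = {x : A | S.toPerm x = x} := by
  have hpow : ∀ (k : ℕ) (x : A), S.toPerm x = x → (S.toPerm ^ k) x = x := by
    intro k x hx
    induction k with
    | zero => rfl
    | succ n ih => rw [pow_succ, Equiv.Perm.mul_apply, hx, ih]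
  have hmul : ∀ x y : A, S.toPerm x = x → S.toPerm y = y → S.toPerm (x * y) = x * y := by
    intro x y hx hy
    rw [S.skew, hx, hpow _ _ hy]
  have hpowmem : ∀ x : A, S.toPerm x = x → ∀ n : ℕ, S.toPerm (x ^ n) = x ^ n := by
    intro x hx n
    induction n with
    | zero => simpa using S.map_one'
    | succ n ih => rw [pow_succ]; exact hmul _ _ ih hx
  constructor
  · refine ⟨{ carrier := setOf (fun x : A => S.toPerm x = x)
              one_mem' := S.map_one'
              mul_mem' := fun hx hy => hmul _ _ hx hy
              inv_mem' := ?_ }, rfl⟩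
    intro x hx
    have h : x⁻¹ = x ^ (orderOf x - 1) := by
      symm
      apply eq_inv_of_mul_eq_one_left
      rw [← pow_succ, Nat.sub_add_cancel (orderOf_pos x), pow_orderOf_eq_one]
    show S.toPerm x⁻¹ = x⁻¹
    rw [h]
    exact hpowmem _ hx _
  · ext y
    simp only [Set.mem_image, Set.mem_setOf_eq]
    constructor
    · rintro ⟨x, hx, rfl⟩; simp [hx]
    · intro hy; exact ⟨y, hy, hy⟩
end

section
/- Let φ be a skew-morphism of a finite group A with power function π. For each x ∈ A, if m is the length of the orbit of x under φ, then σ(x,m) = Σ_{i=1}^{m} π(φ^{i-1}(x)) ≡ 0 (mod m). Moreover σ(x,n) ≡ 0 (mod n), where n = |φ|. -/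
lemma pow_skew {A : Type*} [Group A] (S : SkewMorphism A) (x : A) (k : ℕ) :
    ∀ y : A, (S.toPerm ^ k) (x * y) =
      (S.toPerm ^ k) x * (S.toPerm ^ (∑ i ∈ Finset.range k, S.pi ((S.toPerm ^ i) x))) y := by
  induction k with
  | zero => simp
  | succ k ih =>
    intro y
    rw [Finset.sum_range_succ, pow_succ', Equiv.Perm.mul_apply, ih, S.skew,
      Equiv.Perm.mul_apply]
    congr 1
    rw [← Equiv.Perm.mul_apply, ← pow_add, Nat.add_comm]

lemma fix_pow {A : Type*} [Group A] (S : SkewMorphism A) (x : A) (m : ℕ)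
    (hm : (S.toPerm ^ m) x = x) (l : ℕ) : (S.toPerm ^ (m * l)) x = x := by
  rw [pow_mul]
  induction l with
  | zero => simp
  | succ l ihl => rw [pow_succ, Equiv.Perm.mul_apply, hm, ihl]

lemma sum_mul_period {A : Type*} [Group A] (S : SkewMorphism A) (x : A) (m : ℕ)
    (hm : (S.toPerm ^ m) x = x) (l : ℕ) :
    ∑ i ∈ Finset.range (m * l), S.pi ((S.toPerm ^ i) x)
      = l * ∑ i ∈ Finset.range m, S.pi ((S.toPerm ^ i) x) := by
  induction l with
  | zero => simp
  | succ l ih =>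
    have hml : (S.toPerm ^ (m * l)) x = x := fix_pow S x m hm l
    have hcongr : ∀ i ∈ Finset.range m,
        S.pi ((S.toPerm ^ (m * l + i)) x) = S.pi ((S.toPerm ^ i) x) := by
      intro i _
      rw [Nat.add_comm, pow_add, Equiv.Perm.mul_apply, hml]
    rw [Nat.mul_succ, Finset.sum_range_add, ih, Nat.succ_mul, Finset.sum_congr rfl hcongr]

theorem sigma_orbit_zero {A : Type*} [Group A] [Fintype A] (S : SkewMorphism A) (x : A) :
    (∑ i ∈ Finset.range (Function.minimalPeriod (⇑S.toPerm) x), S.pi ((S.toPerm ^ i) x)) ≡ 0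
        [MOD Function.minimalPeriod (⇑S.toPerm) x] ∧
      (∑ i ∈ Finset.range (orderOf S.toPerm), S.pi ((S.toPerm ^ i) x)) ≡ 0
        [MOD orderOf S.toPerm] := by
  set n := orderOf S.toPerm with hn
  set m := Function.minimalPeriod (⇑S.toPerm) x with hmdef
  have hnpos : 0 < n := orderOf_pos _
  have hpow : S.toPerm ^ n = 1 := pow_orderOf_eq_one _
  -- second part
  have h2 : n ∣ ∑ i ∈ Finset.range n, S.pi ((S.toPerm ^ i) x) := by
    apply orderOf_dvd_of_pow_eq_one
    ext y
    have := pow_skew S x n y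
    rw [hpow] at this
    simpa using this.symm
  have hper : Function.IsPeriodicPt (⇑S.toPerm) n x := by
    show (⇑S.toPerm)^[n] x = x
    rw [Equiv.Perm.iterate_eq_pow, hpow]; rfl
  have hmdvd : m ∣ n := Function.IsPeriodicPt.minimalPeriod_dvd hper
  obtain ⟨l, hl⟩ := hmdvd
  have hmx : (S.toPerm ^ m) x = x := by
    have := Function.isPeriodicPt_minimalPeriod (⇑S.toPerm) x
    rw [Function.IsPeriodicPt, Function.IsFixedPt, Equiv.Perm.iterate_eq_pow] at this
    exact this
  have hsplit := sum_mul_period S x m hmx l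
  rw [← hl] at hsplit
  have hlpos : 0 < l := by
    rcases Nat.eq_zero_or_pos l with h | h
    · exfalso; rw [h, Nat.mul_zero] at hl; omega
    · exact h
  have h1 : m ∣ ∑ i ∈ Finset.range m, S.pi ((S.toPerm ^ i) x) := by
    have : m * l ∣ l * ∑ i ∈ Finset.range m, S.pi ((S.toPerm ^ i) x) := by
      rw [← hsplit, ← hl]; exact h2
    rw [Nat.mul_comm m l] at this
    exact (Nat.mul_dvd_mul_iff_left hlpos).mp this
  constructor
  · simpa [Nat.modEq_zero_iff_dvd] using h1
  · simpa [Nat.modEq_zero_iff_dvd] using h2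
end

section
/- Let φ be a skew-morphism of a finite group A. Then for all x, y ∈ A, the length of the orbit of xy under φ divides lcm(|O_x|, |O_y|), where |O_x| denotes the length of the orbit of x under φ. -/
section Aux

variable {A : Type*} [Group A]

/-- The partial sums of the power function along the orbit of `x`. -/
def sigmaAux (S : SkewMorphism A) (x : A) (k : ℕ) : ℕ :=
  ∑ i ∈ Finset.range k, S.pi ((S.toPerm ^ i) x)

lemma skew_pow (S : SkewMorphism A) (k : ℕ) (x y : A) :
    (S.toPerm ^ k) (x * y) = (S.toPerm ^ k) x * (S.toPerm ^ (sigmaAux S x k)) y := by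
  induction k with
  | zero => simp [sigmaAux]
  | succ k ih =>
      have h1 : (S.toPerm ^ (k + 1)) (x * y) = S.toPerm ((S.toPerm ^ k) (x * y)) := by
        rw [pow_succ', Equiv.Perm.mul_apply]
      have h2 : (S.toPerm ^ (k + 1)) x = S.toPerm ((S.toPerm ^ k) x) := by
        rw [pow_succ', Equiv.Perm.mul_apply]
      rw [h1, ih, S.skew, h2]
      congr 1
      have h3 : sigmaAux S x (k + 1) = S.pi ((S.toPerm ^ k) x) + sigmaAux S x k := by
        rw [sigmaAux, Finset.sum_range_succ, add_comm, sigmaAux]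
      rw [h3, pow_add, Equiv.Perm.mul_apply]

lemma pow_fix {A : Type*} [Group A] (φ : Equiv.Perm A) {p : ℕ} {x : A}
    (h : (φ ^ p) x = x) (k : ℕ) : (φ ^ (k * p)) x = x := by
  induction k with
  | zero => simp
  | succ m ihm =>
      rw [add_mul, one_mul, pow_add, Equiv.Perm.mul_apply, h, ihm]

lemma sigmaAux_mul (S : SkewMorphism A) (x : A) {p : ℕ}
    (hp : (S.toPerm ^ p) x = x) (k : ℕ) :
    sigmaAux S x (k * p) = k * sigmaAux S x p := by
  induction k with
  | zero => simp [sigmaAux]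
  | succ k ih =>
      have hfix : (S.toPerm ^ (k * p)) x = x := pow_fix S.toPerm hp k
      have hstep : ∀ i : ℕ, (S.toPerm ^ (k * p + i)) x = (S.toPerm ^ i) x := by
        intro i
        rw [add_comm, pow_add, Equiv.Perm.mul_apply, hfix]
      have : sigmaAux S x ((k + 1) * p) = sigmaAux S x (k * p) + sigmaAux S x p := by
        rw [sigmaAux, add_mul, one_mul, Finset.sum_range_add]
        congr 1
        exact Finset.sum_congr rfl fun i _ => by rw [hstep i]
      rw [this, ih, add_mul, one_mul]

/-- Key lemma: the length of the orbit of `x` divides the sum of the power function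
values along one full orbit of `x`. -/
lemma minimalPeriod_dvd_sigmaAux {A : Type*} [Group A] [Fintype A] (S : SkewMorphism A)
    (x : A) :
    Function.minimalPeriod (⇑S.toPerm) x ∣
      sigmaAux S x (Function.minimalPeriod (⇑S.toPerm) x) := by
  set φ := S.toPerm
  set p := Function.minimalPeriod (⇑φ) x with hpdef
  set n := orderOf φ with hndef
  have hn : 0 < n := orderOf_pos φ
  have hφn : φ ^ n = 1 := pow_orderOf_eq_one φ
  have hpn : p ∣ n := by
    apply Function.IsPeriodicPt.minimalPeriod_dvd
    show Function.IsPeriodicPt (⇑φ) n x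
    unfold Function.IsPeriodicPt Function.IsFixedPt
    rw [← Equiv.Perm.coe_pow, hφn]
    rfl
  obtain ⟨q, hq⟩ := hpn
  have hpfix : (φ ^ p) x = x := by
    have := Function.isPeriodicPt_minimalPeriod (⇑φ) x
    rwa [Function.IsPeriodicPt, Function.IsFixedPt, ← Equiv.Perm.coe_pow, ← hpdef] at this
  -- φ^n (x * y) = x * y gives φ^{sigma x n} y = y for all y
  have hkey : ∀ y : A, (φ ^ (sigmaAux S x n)) y = y := by
    intro y
    have h := skew_pow S n x y
    rw [hφn] at h
    simp only [Equiv.Perm.coe_one, id_eq] at h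
    exact (mul_left_cancel h.symm)
  have hdvd : n ∣ sigmaAux S x n := by
    apply orderOf_dvd_of_pow_eq_one
    ext y
    simpa using hkey y
  have h2 : sigmaAux S x n = q * sigmaAux S x p := by
    rw [hq, mul_comm p q]; exact sigmaAux_mul S x hpfix q
  have hq0 : 0 < q := by
    rcases Nat.eq_zero_or_pos q with h | h
    · exfalso; rw [h, mul_zero] at hq; omega
    · exact h
  have hdvd2 : q * p ∣ q * sigmaAux S x p := by
    rw [← h2, mul_comm q p, ← hq]; exact hdvd
  exact (Nat.mul_dvd_mul_iff_left hq0).mp hdvd2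

end Aux

theorem orbit_length_mul_dvd {A : Type*} [Group A] [Fintype A] (S : SkewMorphism A)
    (x y : A) :
    Function.minimalPeriod (⇑S.toPerm) (x * y) ∣
      Nat.lcm (Function.minimalPeriod (⇑S.toPerm) x) (Function.minimalPeriod (⇑S.toPerm) y) := by
  set φ := S.toPerm
  set px := Function.minimalPeriod (⇑φ) x with hpx
  set py := Function.minimalPeriod (⇑φ) y with hpy
  set l := Nat.lcm px py with hl
  have hpxl : px ∣ l := Nat.dvd_lcm_left _ _
  have hpyl : py ∣ l := Nat.dvd_lcm_right _ _
  obtain ⟨s, hs⟩ := hpxl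
  have hpxfix : (φ ^ px) x = x := by
    have := Function.isPeriodicPt_minimalPeriod (⇑φ) x
    rwa [Function.IsPeriodicPt, Function.IsFixedPt, ← Equiv.Perm.coe_pow, ← hpx] at this
  -- φ^l fixes x
  have hxl : (φ ^ l) x = x := by
    rw [hs, mul_comm]; exact pow_fix φ hpxfix s
  -- py divides sigmaAux S x l
  have hsig : py ∣ sigmaAux S x l := by
    have h1 : px ∣ sigmaAux S x px := minimalPeriod_dvd_sigmaAux S x
    have h2 : sigmaAux S x l = s * sigmaAux S x px := by
      rw [hs, mul_comm px s]
      exact sigmaAux_mul S x hpxfix s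
    calc py ∣ l := hpyl
      _ = px * s := hs
      _ ∣ (sigmaAux S x px) * s := Nat.mul_dvd_mul_right h1 s
      _ = sigmaAux S x l := by rw [h2, mul_comm]
  -- φ^{sigma} fixes y
  have hyfix : (φ ^ (sigmaAux S x l)) y = y := by
    obtain ⟨t, ht⟩ := hsig
    have hpyfix : (φ ^ py) y = y := by
      have := Function.isPeriodicPt_minimalPeriod (⇑φ) y
      rwa [Function.IsPeriodicPt, Function.IsFixedPt, ← Equiv.Perm.coe_pow, ← hpy] at this
    rw [ht, mul_comm]; exact pow_fix φ hpyfix t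
  -- conclude
  apply Function.IsPeriodicPt.minimalPeriod_dvd
  show Function.IsPeriodicPt (⇑φ) l (x * y)
  unfold Function.IsPeriodicPt Function.IsFixedPt
  rw [← Equiv.Perm.coe_pow]
  show (φ ^ l) (x * y) = x * y
  rw [skew_pow S l x y, hxl, hyfix]
end

section
/- Let φ be a skew-morphism of a finite group A. If A is generated by x_1, …, x_r, then the order of φ equals lcm(|O_{x_1}|, …, |O_{x_r}|), where |O_x| is the length of the orbit of x under φ. -/
namespace SkewMorphismAux

variable {A : Type*} [Group A] (S : SkewMorphism A)

/-- The exponent sum `σ(x, k) = ∑_{i<k} π(φ^i x)`. -/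
def sigma (x : A) (k : ℕ) : ℕ := ∑ i ∈ Finset.range k, S.pi ((S.toPerm ^ i) x)

lemma skew_iterate (x y : A) (k : ℕ) :
    (S.toPerm ^ k) (x * y) = (S.toPerm ^ k) x * (S.toPerm ^ sigma S x k) y := by
  induction k with
  | zero => simp [sigma]
  | succ k ih =>
    have h1 : (S.toPerm ^ (k + 1)) (x * y) = S.toPerm ((S.toPerm ^ k) (x * y)) := by
      rw [pow_succ', Equiv.Perm.mul_apply]
    have hs : sigma S x (k + 1) = sigma S x k + S.pi ((S.toPerm ^ k) x) :=
      Finset.sum_range_succ _ _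
    rw [h1, ih, S.skew, hs]
    congr 1
    · rw [pow_succ', Equiv.Perm.mul_apply]
    · rw [← Equiv.Perm.mul_apply, ← pow_add, add_comm (sigma S x k)]

lemma iterate_one (k : ℕ) : (S.toPerm ^ k) 1 = 1 := by
  induction k with
  | zero => rfl
  | succ k ih => rw [pow_succ', Equiv.Perm.mul_apply, ih, S.map_one']

/-- If `(φ^d) x = x` then the sum `σ` over `c*d` terms is `c` copies of `σ(x,d)`. -/
lemma sigma_mul (x : A) {d : ℕ} (hd : (S.toPerm ^ d) x = x) (c : ℕ) :
    sigma S x (c * d) = c * sigma S x d := by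
  induction c with
  | zero => simp [sigma]
  | succ c ih =>
    have hx : (S.toPerm ^ (c * d)) x = x := by
      clear ih
      induction c with
      | zero => simp
      | succ c ih =>
        rw [Nat.succ_mul, pow_add, Equiv.Perm.mul_apply, hd, ih]
    rw [Nat.succ_mul, sigma, Finset.sum_range_add, ← sigma, ih, Nat.succ_mul]
    congr 1
    unfold sigma
    apply Finset.sum_congr rfl
    intro i _
    congr 1
    rw [add_comm, pow_add, Equiv.Perm.mul_apply, hx]

/-- The order of `φ` divides `σ(x, orderOf φ)`. -/
lemma orderOf_dvd_sigma (x : A) : orderOf S.toPerm ∣ sigma S x (orderOf S.toPerm) := by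
  apply orderOf_dvd_of_pow_eq_one
  ext y
  have h := skew_iterate S x y (orderOf S.toPerm)
  rw [pow_orderOf_eq_one] at h
  simp only [Equiv.Perm.one_apply] at h ⊢
  exact (mul_left_cancel h).symm

end SkewMorphismAux

theorem order_eq_lcm_orbit_lengths {A : Type*} [Group A] [Fintype A] (S : SkewMorphism A)
    {r : ℕ} (xs : Fin r → A) (hgen : Subgroup.closure (Set.range xs) = ⊤) :
    orderOf S.toPerm =
      Finset.univ.lcm fun i : Fin r => Function.minimalPeriod (⇑S.toPerm) (xs i) := by
  classical
  set φ := S.toPerm with hφ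
  set n := orderOf φ with hn
  have hnpos : 0 < n := orderOf_pos φ
  set L := Finset.univ.lcm (fun i : Fin r => Function.minimalPeriod (⇑φ) (xs i)) with hL
  -- every point is periodic with period n
  have hper : ∀ a : A, Function.IsPeriodicPt (⇑φ) n a := by
    intro a
    show (⇑φ)^[n] a = a
    rw [Equiv.Perm.iterate_eq_pow, pow_orderOf_eq_one, Equiv.Perm.one_apply]
  -- minimal period divides n
  have hmpn : ∀ a : A, Function.minimalPeriod (⇑φ) a ∣ n := fun a =>
    (hper a).minimalPeriod_dvd
  -- key: d ∣ σ(x, d) for d the minimal period of x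
  have hdvdsigma : ∀ x : A, Function.minimalPeriod (⇑φ) x ∣
      SkewMorphismAux.sigma S x (Function.minimalPeriod (⇑φ) x) := by
    intro x
    set d := Function.minimalPeriod (⇑φ) x with hd
    have hdx : (φ ^ d) x = x := by
      rw [← Equiv.Perm.iterate_eq_pow]
      exact Function.iterate_minimalPeriod
    obtain ⟨c, hc⟩ := hmpn x
    have hcpos : 0 < c := by
      rcases Nat.eq_zero_or_pos c with h | h
      · subst h; simp at hc; omega
      · exact h
    have hσ : n ∣ SkewMorphismAux.sigma S x n := SkewMorphismAux.orderOf_dvd_sigma S x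
    have e1 : SkewMorphismAux.sigma S x n = c * SkewMorphismAux.sigma S x d := by
      rw [hc, mul_comm d c]
      exact SkewMorphismAux.sigma_mul S x hdx c
    have e2 : n = c * d := by rw [hc, mul_comm]
    have key : c * d ∣ c * SkewMorphismAux.sigma S x d := by rw [← e1, ← e2]; exact hσ
    exact (Nat.mul_dvd_mul_iff_left hcpos).mp key
  -- if d ∣ m then m ∣ σ(x, m)
  have hLsigma : ∀ (x : A) (m : ℕ), Function.minimalPeriod (⇑φ) x ∣ m →
      m ∣ SkewMorphismAux.sigma S x m := by
    intro x m hm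
    set d := Function.minimalPeriod (⇑φ) x with hd
    have hdx : (φ ^ d) x = x := by
      rw [← Equiv.Perm.iterate_eq_pow]
      exact Function.iterate_minimalPeriod
    obtain ⟨c, hc⟩ := hm
    obtain ⟨t, ht⟩ := hdvdsigma x
    have ht' : SkewMorphismAux.sigma S x d = d * t := ht
    have e1 : SkewMorphismAux.sigma S x m = c * (d * t) := by
      rw [hc, mul_comm d c, SkewMorphismAux.sigma_mul S x hdx c, ht']
    exact Dvd.intro t (by rw [e1, hc]; ring)
  apply Nat.dvd_antisymm
  · -- n ∣ L : φ^L fixes everything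
    have key : ∀ a : A, (φ ^ L) a = a := by
      -- the fixed-point set of φ^L
      have hone : (φ ^ L) (1 : A) = 1 := SkewMorphismAux.iterate_one S L
      have hmul : ∀ x y : A, (φ ^ L) x = x → (φ ^ L) y = y → (φ ^ L) (x * y) = x * y := by
        intro x y hx hy
        have hdx : Function.minimalPeriod (⇑φ) x ∣ L := by
          apply Function.IsPeriodicPt.minimalPeriod_dvd
          show (⇑φ)^[L] x = x
          rwa [Equiv.Perm.iterate_eq_pow]
        have hdy : Function.minimalPeriod (⇑φ) y ∣ L := by
          apply Function.IsPeriodicPt.minimalPeriod_dvd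
          show (⇑φ)^[L] y = y
          rwa [Equiv.Perm.iterate_eq_pow]
        have hsig : Function.minimalPeriod (⇑φ) y ∣ SkewMorphismAux.sigma S x L :=
          hdy.trans (hLsigma x L hdx)
        have hy2 : (φ ^ SkewMorphismAux.sigma S x L) y = y := by
          have : Function.IsPeriodicPt (⇑φ) (SkewMorphismAux.sigma S x L) y :=
            (Function.isPeriodicPt_minimalPeriod (⇑φ) y).trans_dvd hsig
          rw [← Equiv.Perm.iterate_eq_pow]
          exact this
        rw [SkewMorphismAux.skew_iterate S x y L, hx, hy2]
      -- closed under powers, hence inverses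
      have hpow : ∀ (x : A) (k : ℕ), (φ ^ L) x = x → (φ ^ L) (x ^ k) = x ^ k := by
        intro x k hx
        induction k with
        | zero => simpa using hone
        | succ k ih => rw [pow_succ, hmul _ _ ih hx]
      have hinv : ∀ x : A, (φ ^ L) x = x → (φ ^ L) x⁻¹ = x⁻¹ := by
        intro x hx
        have hxo : x ^ (orderOf x - 1) = x⁻¹ := by
          have h1 : x * x ^ (orderOf x - 1) = 1 := by
            rw [← pow_succ', Nat.sub_add_cancel (orderOf_pos x), pow_orderOf_eq_one]
          exact (inv_eq_of_mul_eq_one_right h1).symm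
        rw [← hxo]
        exact hpow x _ hx
      intro a
      have ha : a ∈ Subgroup.closure (Set.range xs) := by rw [hgen]; trivial
      refine Subgroup.closure_induction (p := fun g _ => (φ ^ L) g = g) ?_ hone
        (fun x y _ _ hx hy => hmul x y hx hy) (fun x _ hx => hinv x hx) ha
      intro x hx
      obtain ⟨i, rfl⟩ := hx
      have hdL : Function.minimalPeriod (⇑φ) (xs i) ∣ L :=
        Finset.dvd_lcm (Finset.mem_univ i)
      have : Function.IsPeriodicPt (⇑φ) L (xs i) :=
        (Function.isPeriodicPt_minimalPeriod (⇑φ) (xs i)).trans_dvd hdL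
      rw [← Equiv.Perm.iterate_eq_pow]
      exact this
    apply orderOf_dvd_of_pow_eq_one
    ext a
    simpa using key a
  · exact Finset.lcm_dvd fun i _ => hmpn (xs i)
end

section
/- Let φ be a skew-morphism of a finite group A and let Π be a set of primes. Then Orbit^Π(φ) = {x ∈ A : every prime dividing the orbit length |O_x| lies in Π} is a φ-invariant subgroup of A containing Fix φ. -/
/-!
The orbit length of `x` under `φ` is its minimal period. Iterating the skew identity gives
`φ^k (x y) = φ^k x · φ^{σ_k(x)} y` with `σ_k(x) = ∑_{j<k} π(φ^j x)`, and `σ` is additive along a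
period of `x`, so `|O_{xy}|` divides `|O_x| · |O_y|`. Hence the elements whose orbit length is a
Π-number are closed under multiplication, and, `A` being finite, form a subgroup. Orbit lengths
are constant along orbits, so this subgroup is `φ`-invariant, and fixed points have orbit length `1`.
-/

open Function

def IsPiNumber (P : Set ℕ) (n : ℕ) : Prop :=
  ∀ p : ℕ, p.Prime → p ∣ n → p ∈ P

namespace IsPiNumber

variable {P : Set ℕ} {m n : ℕ}

theorem one (P : Set ℕ) : IsPiNumber P 1 :=
  fun _ hp hdvd => absurd (Nat.dvd_one.mp hdvd) hp.ne_one

theorem mul (hm : IsPiNumber P m) (hn : IsPiNumber P n) : IsPiNumber P (m * n) :=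
  fun p hp hdvd => (hp.dvd_mul.mp hdvd).elim (hm p hp) (hn p hp)

theorem of_dvd (hn : IsPiNumber P n) (hmn : m ∣ n) : IsPiNumber P m :=
  fun p hp hdvd => hn p hp (hdvd.trans hmn)

end IsPiNumber

theorem Equiv.Perm.image_setOf_minimalPeriod {α : Type*} [Finite α] (σ : Equiv.Perm α)
    (Q : ℕ → Prop) : σ '' {x | Q (minimalPeriod σ x)} = {x | Q (minimalPeriod σ x)} := by
  have hσ : ∀ x, minimalPeriod σ (σ x) = minimalPeriod σ x := fun x =>
    minimalPeriod_apply (σ.injective.mem_periodicPts x)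
  ext x
  rw [σ.image_eq_preimage_symm, Set.mem_preimage, Set.mem_ofPred_eq, Set.mem_ofPred_eq,
    ← hσ (σ.symm x), Equiv.apply_symm_apply]

namespace SkewMorphism

variable {A : Type*} [Group A] (S : SkewMorphism A)

/-- `σ_k(x) = ∑_{j<k} π(φ^j x)`, the exponent in `φ^k (x y) = φ^k x · φ^{σ_k(x)} y`. -/
def piSum (x : A) (k : ℕ) : ℕ :=
  ∑ j ∈ Finset.range k, S.pi (S.toPerm^[j] x)

theorem iterate_mul (x y : A) (k : ℕ) :
    S.toPerm^[k] (x * y) = S.toPerm^[k] x * S.toPerm^[S.piSum x k] y := by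
  induction k with
  | zero => simp [piSum]
  | succ k ih =>
    rw [iterate_succ_apply', ih, S.skew, Equiv.Perm.coe_pow, ← iterate_add_apply,
      ← iterate_succ_apply' (⇑S.toPerm) k x, piSum, piSum, Finset.sum_range_succ, add_comm]

theorem piSum_add (x : A) (m k : ℕ) :
    S.piSum x (m + k) = S.piSum x m + S.piSum (S.toPerm^[m] x) k := by
  rw [piSum, piSum, piSum, Finset.sum_range_add]
  congr 1
  refine Finset.sum_congr rfl fun j _ => ?_
  rw [← iterate_add_apply, add_comm]

theorem piSum_mul_of_isPeriodicPt {a : ℕ} {x : A} (hx : IsPeriodicPt S.toPerm a x) (b : ℕ) :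
    S.piSum x (b * a) = b * S.piSum x a := by
  induction b with
  | zero => simp [piSum]
  | succ b ih => rw [Nat.succ_mul, S.piSum_add, (hx.const_mul b).eq, ih, Nat.succ_mul]

theorem isPeriodicPt_mul {a b : ℕ} {x y : A} (hx : IsPeriodicPt S.toPerm a x)
    (hy : IsPeriodicPt S.toPerm b y) : IsPeriodicPt S.toPerm (a * b) (x * y) := by
  have hsum : S.piSum x (a * b) = b * S.piSum x a := by
    rw [mul_comm, S.piSum_mul_of_isPeriodicPt hx]
  rw [IsPeriodicPt, IsFixedPt, S.iterate_mul, hsum, (hx.mul_const b).eq, (hy.mul_const _).eq]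

theorem minimalPeriod_mul_dvd (x y : A) :
    minimalPeriod S.toPerm (x * y) ∣ minimalPeriod S.toPerm x * minimalPeriod S.toPerm y :=
  (S.isPeriodicPt_mul (isPeriodicPt_minimalPeriod _ x)
    (isPeriodicPt_minimalPeriod _ y)).minimalPeriod_dvd

theorem minimalPeriod_one : minimalPeriod S.toPerm 1 = 1 :=
  minimalPeriod_eq_one_iff_isFixedPt.mpr S.map_one'

/-- `Orbit^Π(φ)`: the elements whose `φ`-orbit length is a `Π`-number. -/
def orbitSubmonoid (P : Set ℕ) : Submonoid A where
  carrier := {x | IsPiNumber P (minimalPeriod S.toPerm x)}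
  one_mem' := by
    rw [Set.mem_ofPred_eq, S.minimalPeriod_one]
    exact IsPiNumber.one P
  mul_mem' {x y} hx hy := (hx.mul hy).of_dvd (S.minimalPeriod_mul_dvd x y)

def orbitSubgroup [Finite A] (P : Set ℕ) : Subgroup A where
  __ := S.orbitSubmonoid P
  inv_mem' {x} hx := by
    obtain ⟨n, hn⟩ := mem_powers_iff_mem_zpowers.mpr (inv_mem (Subgroup.mem_zpowers x))
    exact hn ▸ (S.orbitSubmonoid P).pow_mem hx n

end SkewMorphism

theorem pi_orbits_subgroup_general {A : Type*} [Group A] [Fintype A] (S : SkewMorphism A)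
    (P : Set ℕ) :
    ∃ H : Subgroup A,
      (H : Set A) =
        {x : A | ∀ p : ℕ, p.Prime → p ∣ Function.minimalPeriod (⇑S.toPerm) x → p ∈ P} ∧
      S.toPerm '' (H : Set A) = (H : Set A) ∧
      {x : A | S.toPerm x = x} ⊆ (H : Set A) := by
  refine ⟨S.orbitSubgroup P, rfl, S.toPerm.image_setOf_minimalPeriod (IsPiNumber P),
    fun x hx => ?_⟩
  show IsPiNumber P (minimalPeriod S.toPerm x)
  rw [minimalPeriod_eq_one_iff_isFixedPt.mpr hx]
  exact IsPiNumber.one P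

theorem pi_orbits_subgroup {A : Type*} [Group A] [Fintype A] (S : SkewMorphism A)
    (P : Set ℕ) (hP : ∀ p ∈ P, p.Prime) :
    ∃ H : Subgroup A,
      (H : Set A) =
        {x : A | ∀ p : ℕ, p.Prime → p ∣ Function.minimalPeriod (⇑S.toPerm) x → p ∈ P} ∧
      S.toPerm '' (H : Set A) = (H : Set A) ∧
      {x : A | S.toPerm x = x} ⊆ (H : Set A) :=
  pi_orbits_subgroup_general S P
end

section
/- Let φ be a kernel-preserving skew-morphism of a finite abelian group A of order n with power function π, and let k be the order of the restriction of φ to Ker φ. Then for all x ∈ A, π(x) ≡ 1 (mod k). -/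
theorem abelian_kernel_preserving_pi_mod {A : Type*} [CommGroup A] [Fintype A]
    (S : SkewMorphism A) (hkp : S.toPerm '' S.ker = S.ker)
    (k : ℕ) (hk : 0 < k)
    (hfix : ∀ u ∈ S.ker, (S.toPerm ^ k) u = u)
    (hmin : ∀ j : ℕ, 0 < j → (∀ u ∈ S.ker, (S.toPerm ^ j) u = u) → k ≤ j) :
    ∀ x : A, S.pi x ≡ 1 [MOD k] := by
  -- multiples of k fix the kernel pointwise
  have hmul : ∀ q : ℕ, ∀ u ∈ S.ker, (S.toPerm ^ (k * q)) u = u := by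
    intro q
    induction q with
    | zero => intro u _; simp
    | succ q ih =>
      intro u hu
      have : k * (q + 1) = k + k * q := by ring
      rw [this, pow_add]
      simp only [Equiv.Perm.mul_apply]
      rw [ih u hu, hfix u hu]
  -- any j fixing the kernel pointwise is a multiple of k
  have hdvd : ∀ j : ℕ, (∀ u ∈ S.ker, (S.toPerm ^ j) u = u) → k ∣ j := by
    intro j hj
    have hrep : j = k * (j / k) + j % k := (Nat.div_add_mod j k).symm
    have hr : ∀ u ∈ S.ker, (S.toPerm ^ (j % k)) u = u := by
      intro u hu
      have h1 : (S.toPerm ^ j) u = (S.toPerm ^ (j % k)) ((S.toPerm ^ (k * (j / k))) u) := by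
        conv_lhs => rw [hrep, add_comm, pow_add]
        simp [Equiv.Perm.mul_apply]
      rw [hmul (j / k) u hu] at h1
      rw [← h1, hj u hu]
    rcases Nat.eq_zero_or_pos (j % k) with h0 | hpos
    · exact Nat.dvd_of_mod_eq_zero h0
    · exact absurd (hmin _ hpos hr) (Nat.not_le.mpr (Nat.mod_lt _ hk))
  intro x
  -- key identity: φ^{π x} u = φ u for u in the kernel
  have key : ∀ u ∈ S.ker, (S.toPerm ^ S.pi x) u = S.toPerm u := by
    intro u hu
    have h1 : S.toPerm ^ S.pi u = S.toPerm := by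
      have := (pow_eq_pow_iff_modEq (x := S.toPerm)).mpr hu
      simpa using this
    have h2 := S.skew x u
    have h3 := S.skew u x
    rw [h1, mul_comm (S.toPerm u) (S.toPerm x)] at h3
    rw [mul_comm x u, h3] at h2
    exact (mul_left_cancel h2).symm
  rcases Nat.eq_zero_or_pos (S.pi x) with h0 | hpos
  · -- then φ fixes the kernel pointwise, so k = 1
    have : ∀ u ∈ S.ker, (S.toPerm ^ 1) u = u := by
      intro u hu
      have := key u hu
      rw [h0] at this
      simpa using this.symm
    have hk1 : k = 1 := le_antisymm (hmin 1 one_pos this) hk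
    rw [hk1]
    exact Nat.modEq_one
  · -- φ^{π x - 1} fixes the kernel pointwise, so k ∣ π x - 1
    have hfixm : ∀ v ∈ S.ker, (S.toPerm ^ (S.pi x - 1)) v = v := by
      intro v hv
      rw [← hkp] at hv
      obtain ⟨u, hu, rfl⟩ := hv
      have h1 : (S.toPerm ^ (S.pi x - 1)) (S.toPerm u) = (S.toPerm ^ S.pi x) u := by
        have : S.pi x = (S.pi x - 1) + 1 := by omega
        conv_rhs => rw [this, pow_add]
        simp [Equiv.Perm.mul_apply]
      rw [h1, key u hu]
    have := hdvd _ hfixm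
    exact (Nat.modEq_iff_dvd' (by omega)).mpr this |>.symm
end

section
/- Let φ be a smooth skew-morphism of a finite group A of order n. Then for every positive integer k, μ = φ^k is also a smooth skew-morphism of A, of order n/gcd(n,k), with power function π_μ(x) ≡ π(x) (mod n/gcd(n,k)). -/
theorem smooth_power_smooth {A : Type*} [Group A] [Fintype A] (S : SkewMorphism A)
    (hsmooth : ∀ x : A, S.pi (S.toPerm x) ≡ S.pi x [MOD orderOf S.toPerm])
    (k : ℕ) (hk : 0 < k) :
    ∃ T : SkewMorphism A,
      T.toPerm = S.toPerm ^ k ∧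
      orderOf T.toPerm = orderOf S.toPerm / Nat.gcd (orderOf S.toPerm) k ∧
      (∀ x : A, T.pi x ≡ S.pi x [MOD orderOf S.toPerm / Nat.gcd (orderOf S.toPerm) k]) ∧
      (∀ x : A, T.pi (T.toPerm x) ≡ T.pi x [MOD orderOf T.toPerm]) := by
  set φ := S.toPerm with hφ
  set n := orderOf φ with hn
  -- smoothness along all powers
  have hsm : ∀ (m : ℕ) (x : A), S.pi ((φ ^ m) x) ≡ S.pi x [MOD n] := by
    intro m
    induction m with
    | zero => intro x; simp [Nat.ModEq.refl]
    | succ m ih =>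
      intro x
      have : (φ ^ (m + 1)) x = φ ((φ ^ m) x) := by
        rw [pow_succ']
        rfl
      rw [this]
      exact (hsmooth _).trans (ih x)
  -- power skew law
  have hskew : ∀ (m : ℕ) (x y : A),
      (φ ^ m) (x * y) = (φ ^ m) x * (φ ^ (m * S.pi x)) y := by
    intro m
    induction m with
    | zero => intro x y; simp
    | succ m ih =>
      intro x y
      have h1 : ∀ z : A, (φ ^ (m + 1)) z = φ ((φ ^ m) z) := by
        intro z; rw [pow_succ']; rfl
      rw [h1, ih, S.skew, h1]
      congr 1
      have hmod : S.pi ((φ ^ m) x) + m * S.pi x ≡ (m + 1) * S.pi x [MOD n] := by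
        calc S.pi ((φ ^ m) x) + m * S.pi x
            ≡ S.pi x + m * S.pi x [MOD n] := Nat.ModEq.add_right _ (hsm m x)
          _ = (m + 1) * S.pi x := by ring
      have hpow : φ ^ (S.pi ((φ ^ m) x) + m * S.pi x) = φ ^ ((m + 1) * S.pi x) :=
        (pow_eq_pow_iff_modEq.mpr hmod)
      calc (φ ^ S.pi ((φ ^ m) x)) ((φ ^ (m * S.pi x)) y)
          = (φ ^ (S.pi ((φ ^ m) x) + m * S.pi x)) y := by
            rw [pow_add]; rfl
        _ = (φ ^ ((m + 1) * S.pi x)) y := by rw [hpow]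
  refine ⟨⟨φ ^ k, S.pi, ?_, ?_⟩, rfl, ?_, ?_, ?_⟩
  · -- map_one
    induction k with
    | zero => simp
    | succ m ih =>
      have : (φ ^ (m + 1)) (1 : A) = φ ((φ ^ m) 1) := by rw [pow_succ']; rfl
      by_cases hm : 0 < m
      · rw [this, ih hm, S.map_one']
      · simp at hm; subst hm; simpa using S.map_one'
  · -- skew
    intro x y
    rw [hskew k x y, pow_mul]
  · -- order
    simpa using orderOf_pow φ
  · intro x; exact Nat.ModEq.refl _
  · -- smoothness of T
    intro x
    have hdvd : orderOf (φ ^ k) ∣ n := orderOf_pow_dvd k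
    exact Nat.ModEq.of_dvd hdvd (hsm k x)
end

section
/- Let φ be a smooth skew-morphism of the dihedral group D_n = ⟨a, b | a^n = b^2 = 1, b^{-1}ab = a^{-1}⟩ with n ≥ 3 odd. Then φ is an automorphism of D_n. -/
/-!
For a smooth skew-morphism the power function is a homomorphism `A → (ℤ/mℤ)ˣ`, so its kernel
contains the derived subgroup; for `n` odd every rotation of `D_n` is a commutator, so only the
reflections could lie outside `Ker φ`. If they did, `Ker φ` would be the rotation subgroup and
`φ` would preserve rotations and reflections; then `φ ^ t = φ` for `t = π (sr 0)` (a reflection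
conjugates `φ (r i)` back to its inverse, and reflections are involutions), forcing `t ≡ 1`.
So `Ker φ = D_n` and `φ` is an automorphism.
-/

namespace SkewMorphism

variable {A : Type*} [Group A] (S : SkewMorphism A)

def IsSmooth : Prop :=
  ∀ x, S.pi (S.toPerm x) ≡ S.pi x [MOD orderOf S.toPerm]

lemma pow_apply_eq_of_modEq {a b : ℕ} (h : a ≡ b [MOD orderOf S.toPerm]) (y : A) :
    (S.toPerm ^ a) y = (S.toPerm ^ b) y := by
  rw [pow_eq_pow_iff_modEq.mpr h]

lemma pi_one_modEq : S.pi 1 ≡ 1 [MOD orderOf S.toPerm] := by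
  refine pow_eq_pow_iff_modEq.mp (Equiv.ext fun y => ?_)
  simpa [S.map_one'] using (S.skew 1 y).symm

lemma pow_pi_apply (x y : A) : (S.toPerm ^ S.pi x) y = (S.toPerm x)⁻¹ * S.toPerm (x * y) := by
  rw [S.skew, inv_mul_cancel_left]

lemma pow_pi_apply_inv (x : A) : (S.toPerm ^ S.pi x) x⁻¹ = (S.toPerm x)⁻¹ := by
  rw [pow_pi_apply, mul_inv_cancel, S.map_one', mul_one]

lemma map_mul_of_mem_ker {x : A} (hx : x ∈ S.ker) (y : A) :
    S.toPerm (x * y) = S.toPerm x * S.toPerm y := by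
  rw [S.skew, S.pow_apply_eq_of_modEq hx, pow_one]

lemma map_inv_of_mem_ker {x : A} (hx : x ∈ S.ker) : S.toPerm x⁻¹ = (S.toPerm x)⁻¹ := by
  rw [← S.pow_pi_apply_inv, S.pow_apply_eq_of_modEq hx, pow_one]

namespace IsSmooth

variable {S}

lemma pi_pow_apply_modEq (hS : S.IsSmooth) (k : ℕ) (x : A) :
    S.pi ((S.toPerm ^ k) x) ≡ S.pi x [MOD orderOf S.toPerm] := by
  induction k generalizing x with
  | zero => rfl
  | succ k ih => exact (ih (S.toPerm x)).trans (hS x)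

lemma pow_apply_mul (hS : S.IsSmooth) (k : ℕ) (x y : A) :
    (S.toPerm ^ k) (x * y) = (S.toPerm ^ k) x * (S.toPerm ^ (k * S.pi x)) y := by
  induction k with
  | zero => simp
  | succ k ih =>
    have hexp : S.pi ((S.toPerm ^ k) x) + k * S.pi x ≡ (k + 1) * S.pi x
        [MOD orderOf S.toPerm] := by
      simpa [add_mul, add_comm] using (hS.pi_pow_apply_modEq k x).add_right (k * S.pi x)
    rw [pow_succ', Equiv.Perm.mul_apply, ih, S.skew, ← Equiv.Perm.mul_apply, ← pow_succ',
      ← Equiv.Perm.mul_apply, ← pow_add, S.pow_apply_eq_of_modEq hexp]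

lemma pi_mul_modEq (hS : S.IsSmooth) (x y : A) :
    S.pi (x * y) ≡ S.pi x * S.pi y [MOD orderOf S.toPerm] := by
  refine pow_eq_pow_iff_modEq.mp (Equiv.ext fun z => mul_left_cancel (a := S.toPerm (x * y)) ?_)
  calc S.toPerm (x * y) * (S.toPerm ^ S.pi (x * y)) z
      = S.toPerm (x * (y * z)) := by rw [← S.skew, mul_assoc]
    _ = S.toPerm (x * y) * (S.toPerm ^ (S.pi x * S.pi y)) z := by
      rw [S.skew, hS.pow_apply_mul, S.skew x y, mul_assoc]

noncomputable def powerHom (hS : S.IsSmooth) : A →* ZMod (orderOf S.toPerm) where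
  toFun x := S.pi x
  map_one' := by
    simpa using (ZMod.natCast_eq_natCast_iff _ _ _).mpr S.pi_one_modEq
  map_mul' x y := by
    simpa using (ZMod.natCast_eq_natCast_iff _ _ _).mpr (hS.pi_mul_modEq x y)

lemma powerHom_apply (hS : S.IsSmooth) (x : A) : hS.powerHom x = S.pi x := rfl

lemma mem_ker_iff_powerHom_eq_one (hS : S.IsSmooth) (x : A) :
    x ∈ S.ker ↔ hS.powerHom x = 1 := by
  rw [powerHom_apply, ← Nat.cast_one, ZMod.natCast_eq_natCast_iff]
  rfl

lemma commutator_subset_ker (hS : S.IsSmooth) : (commutator A : Set A) ⊆ S.ker := fun x hx => by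
  rw [hS.mem_ker_iff_powerHom_eq_one, ← MonoidHom.coe_toHomUnits, Units.val_eq_one]
  exact Abelianization.commutator_subset_ker hS.powerHom.toHomUnits hx

lemma map_mem_ker_iff (hS : S.IsSmooth) (x : A) : S.toPerm x ∈ S.ker ↔ x ∈ S.ker :=
  ⟨(hS x).symm.trans, (hS x).trans⟩

end IsSmooth

end SkewMorphism

namespace DihedralGroup

open scoped commutatorElement

variable {n : ℕ}

lemma commutatorElement_r_sr_zero (i : ZMod n) : ⁅r i, sr 0⁆ = r (i + i) := by
  simp [commutatorElement_def, sub_eq_add_neg]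

lemma r_mem_commutator (hn : Odd n) (i : ZMod n) : r i ∈ commutator (DihedralGroup n) := by
  let two : (ZMod n)ˣ := ZMod.unitOfCoprime 2 (Nat.coprime_two_left.mpr hn)
  have hhalf : i * ↑two⁻¹ + i * ↑two⁻¹ = i := by
    rw [← mul_two, mul_assoc, show (2 : ZMod n) = two from rfl, Units.inv_mul, mul_one]
  rw [← hhalf, ← commutatorElement_r_sr_zero]
  exact Subgroup.commutator_mem_commutator (Subgroup.mem_top _) (Subgroup.mem_top _)

end DihedralGroup

namespace SkewMorphism.IsSmooth

open DihedralGroup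

variable {n : ℕ} {S : SkewMorphism (DihedralGroup n)}

lemma r_mem_ker (hS : S.IsSmooth) (hn : Odd n) (i : ZMod n) : r i ∈ S.ker :=
  hS.commutator_subset_ker (r_mem_commutator hn i)

lemma pi_sr_modEq (hS : S.IsSmooth) (hn : Odd n) (i : ZMod n) :
    S.pi (sr i) ≡ S.pi (sr 0) [MOD orderOf S.toPerm] := by
  rw [← ZMod.natCast_eq_natCast_iff, ← powerHom_apply hS, ← powerHom_apply hS,
    show sr i = r (-i) * sr 0 by simp, map_mul,
    (hS.mem_ker_iff_powerHom_eq_one _).mp (hS.r_mem_ker hn _), one_mul]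

lemma sr_mem_ker_iff (hS : S.IsSmooth) (hn : Odd n) (i : ZMod n) :
    sr i ∈ S.ker ↔ sr 0 ∈ S.ker :=
  ⟨(hS.pi_sr_modEq hn i).symm.trans, (hS.pi_sr_modEq hn i).trans⟩

section ReflectionsOutsideKer

variable (hS : S.IsSmooth) (hn : Odd n) (hsr : sr 0 ∉ S.ker)
include hS hn hsr

lemma exists_map_r_eq_r (i : ZMod n) : ∃ k, S.toPerm (r i) = r k := by
  have hker := (hS.map_mem_ker_iff (r i)).mpr (hS.r_mem_ker hn i)
  cases h : S.toPerm (r i) with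
  | r k => exact ⟨k, rfl⟩
  | sr k => exact absurd ((hS.sr_mem_ker_iff hn k).mp (h ▸ hker)) hsr

lemma exists_map_sr_eq_sr (j : ZMod n) : ∃ k, S.toPerm (sr j) = sr k := by
  have hker : S.toPerm (sr j) ∉ S.ker :=
    (hS.map_mem_ker_iff _).not.mpr ((hS.sr_mem_ker_iff hn j).not.mpr hsr)
  cases h : S.toPerm (sr j) with
  | sr k => exact ⟨k, rfl⟩
  | r k => exact absurd (h ▸ hS.r_mem_ker hn k) hker

lemma pow_pi_sr_zero_eq : S.toPerm ^ S.pi (sr 0) = S.toPerm := by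
  obtain ⟨c, hc⟩ := exists_map_sr_eq_sr hS hn hsr 0
  ext x
  cases x with
  | r i =>
    obtain ⟨k, hk⟩ := exists_map_r_eq_r hS hn hsr i
    have hconj : sr 0 * r i = (r i)⁻¹ * sr 0 := by simp
    rw [pow_pi_apply, hconj, S.map_mul_of_mem_ker (by simpa using hS.r_mem_ker hn (-i)),
      S.map_inv_of_mem_ker (hS.r_mem_ker hn i), hc, hk]
    simp
  | sr j =>
    obtain ⟨k, hk⟩ := exists_map_sr_eq_sr hS hn hsr j
    have hinv := S.pow_pi_apply_inv (sr j)
    rw [inv_sr, S.pow_apply_eq_of_modEq (hS.pi_sr_modEq hn j)] at hinv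
    rw [hinv, hk, inv_sr]

end ReflectionsOutsideKer

lemma mem_ker (hS : S.IsSmooth) (hn : Odd n) (x : DihedralGroup n) : x ∈ S.ker := by
  have hsr : sr 0 ∈ S.ker := by
    by_contra hsr
    exact hsr (pow_eq_pow_iff_modEq.mp (by rw [pow_one, pow_pi_sr_zero_eq hS hn hsr]))
  cases x with
  | r i => exact hS.r_mem_ker hn i
  | sr j => exact (hS.sr_mem_ker_iff hn j).mpr hsr

end SkewMorphism.IsSmooth

theorem smooth_skew_morphism_dihedral_odd_general (n : ℕ) (hodd : Odd n)
    (S : SkewMorphism (DihedralGroup n))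
    (hsmooth : ∀ x, S.pi (S.toPerm x) ≡ S.pi x [MOD orderOf S.toPerm]) :
    ∀ x y : DihedralGroup n, S.toPerm (x * y) = S.toPerm x * S.toPerm y :=
  fun x y => S.map_mul_of_mem_ker (SkewMorphism.IsSmooth.mem_ker hsmooth hodd x) y

theorem smooth_skew_morphism_dihedral_odd (n : ℕ) (hn : 3 ≤ n) (hodd : Odd n)
    (S : SkewMorphism (DihedralGroup n))
    (hsmooth : ∀ x, S.pi (S.toPerm x) ≡ S.pi x [MOD orderOf S.toPerm]) :
    ∀ x y : DihedralGroup n, S.toPerm (x * y) = S.toPerm x * S.toPerm y :=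
  smooth_skew_morphism_dihedral_odd_general n hodd S hsmooth
end
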